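/- (Kinetic flux identity.) Let d ∈ ℕ and let f : ℝ^d × ℝ → ℝ^d be twice continuously differentiable with Σ_{i=1}^d ∂_{x_i} f_i(x,λ) = 0 for all (x,λ). Let u : ℝ^d → ℝ be continuously differentiable and let ρ : ℝ → ℝ be continuously differentiable with compact support. Define the vector field Y : ℝ^d → ℝ^d by Y(x) := ∫_ℝ 1_{(−∞,u(x))}(λ) · ∂_λ f(x,λ) · ρ(λ) dλ. Then Y is differentiable and div Y(x) = ρ(u(x)) · div( y ↦ f(y,u(y)) )(x) for every x ∈ ℝ^d, where div( y ↦ f(y,u(y)) )(x) = Σ_{i=1}^d ∂_{x_i}[ f_i(·,u(·)) ](x) is the divergence of the composed vector field. -/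

import Mathlib

/-!
Pick `a` below the support of `ρ`. Then `Y x = ∫_a^{u x} ρ(λ) ∂_λ f(x, λ) dλ` is a parametric
primitive evaluated on the graph of `u`, and the chain rule gives
`div Y = ∫_a^u ρ(λ) div_x ∂_λ f(x, λ) dλ + ⟨∇u, ρ(u) ∂_λ f(x, u)⟩`.
Mixed partials commute, so `div_x ∂_λ f = ∂_λ div_x f = 0` and the integral vanishes. The same
chain rule gives `div (f(·, u(·))) = div_x f(x, u) + ⟨∇u, ∂_λ f(x, u)⟩ = ⟨∇u, ∂_λ f(x, u)⟩`.
-/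

open MeasureTheory RealInnerProductSpace

noncomputable def vdiv {d : ℕ} (V : EuclideanSpace ℝ (Fin d) → EuclideanSpace ℝ (Fin d))
    (x : EuclideanSpace ℝ (Fin d)) : ℝ :=
  ∑ i : Fin d, fderiv ℝ V x (EuclideanSpace.single i (1 : ℝ)) i

open ContinuousLinearMap

section Partials

variable {E F : Type*} [NormedAddCommGroup E] [NormedSpace ℝ E] [NormedAddCommGroup F]
  [NormedSpace ℝ F] {f : E × ℝ → F} {x : E} {t : ℝ}

theorem fderiv_slice_fst (hf : DifferentiableAt ℝ f (x, t)) :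
    fderiv ℝ (fun y => f (y, t)) x = (fderiv ℝ f (x, t)).comp (inl ℝ E ℝ) :=
  (hf.hasFDerivAt.comp x ((hasFDerivAt_id x).prodMk (hasFDerivAt_const t x))).fderiv

theorem deriv_slice_snd (hf : DifferentiableAt ℝ f (x, t)) :
    deriv (fun s => f (x, s)) t = fderiv ℝ f (x, t) (0, 1) :=
  (hf.hasFDerivAt.comp_hasDerivAt t ((hasDerivAt_const t x).prodMk (hasDerivAt_id t))).deriv

theorem hasFDerivAt_coprod_partials (hf : DifferentiableAt ℝ f (x, t)) :
    HasFDerivAt f ((fderiv ℝ (fun y => f (y, t)) x).coprod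
      ((1 : ℝ →L[ℝ] ℝ).smulRight (deriv (fun s => f (x, s)) t))) (x, t) := by
  convert hf.hasFDerivAt using 1
  ext <;> simp [fderiv_slice_fst hf, deriv_slice_snd hf]

theorem HasFDerivAt.comp_graph {u : E → ℝ} {A : E →L[ℝ] F} {w : F} {L : E →L[ℝ] ℝ}
    (hf : HasFDerivAt f (A.coprod ((1 : ℝ →L[ℝ] ℝ).smulRight w)) (x, u x))
    (hu : HasFDerivAt u L x) :
    HasFDerivAt (fun y => f (y, u y)) (A + L.smulRight w) x := by
  refine (hf.comp x ((hasFDerivAt_id x).prodMk hu)).congr_fderiv ?_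
  ext v
  simp

theorem continuous_fderiv_slice_fst (hf : ContDiff ℝ 1 f) :
    Continuous fun p : E × ℝ => fderiv ℝ (fun y => f (y, p.2)) p.1 := by
  simp only [fderiv_slice_fst (hf.differentiable one_ne_zero _)]
  exact (hf.continuous_fderiv one_ne_zero).clm_comp continuous_const

theorem contDiff_deriv_slice {n : WithTop ℕ∞} (hf : ContDiff ℝ (n + 1) f) :
    ContDiff ℝ n (fun p : E × ℝ => deriv (fun s => f (p.1, s)) p.2) := by
  have hdiff : Differentiable ℝ f := hf.differentiable (by simp)
  simp only [deriv_slice_snd (hdiff _)]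
  exact (hf.fderiv_right le_rfl).clm_apply contDiff_const

theorem fderiv_deriv_slice_comm (hf : ContDiff ℝ 2 f) :
    fderiv ℝ (fun y => deriv (fun s => f (y, s)) t) x
      = deriv (fun s => fderiv ℝ (fun y => f (y, s)) x) t := by
  have hdiff : Differentiable ℝ f := hf.differentiable (by simp)
  have hdiff' : Differentiable ℝ (fderiv ℝ f) :=
    (hf.fderiv_right (m := 1) (by norm_num)).differentiable one_ne_zero
  have hsymm := hf.contDiffAt.isSymmSndFDerivAt (x := (x, t)) (by simp)
  simp only [deriv_slice_snd (hdiff _), fderiv_slice_fst (hdiff _)]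
  have hx : HasFDerivAt (fun y => fderiv ℝ f (y, t) (0, 1))
      (((fderiv ℝ (fderiv ℝ f) (x, t)).comp (inl ℝ E ℝ)).flip (0, 1)) x :=
    (((hdiff' _).hasFDerivAt.comp x
      ((hasFDerivAt_id x).prodMk (hasFDerivAt_const t x))).clm_apply
        (hasFDerivAt_const _ _)).congr_fderiv (by ext; simp)
  have ht : HasDerivAt (fun s => (fderiv ℝ f (x, s)).comp (inl ℝ E ℝ))
      ((fderiv ℝ (fderiv ℝ f) (x, t) (0, 1)).comp (inl ℝ E ℝ)) t :=
    (((hdiff' _).hasFDerivAt.comp_hasDerivAt t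
      ((hasDerivAt_const t x).prodMk (hasDerivAt_id t))).clm_comp
        (hasDerivAt_const _ _)).congr_deriv (by simp)
  rw [hx.fderiv, ht.deriv]
  ext v
  simp [hsymm (v, 0) (0, 1)]

end Partials

section Trace

variable (E : Type*) [NormedAddCommGroup E] [NormedSpace ℝ E] [FiniteDimensional ℝ E]

noncomputable def traceCLM : (E →L[ℝ] E) →L[ℝ] ℝ :=
  LinearMap.toContinuousLinearMap (LinearMap.trace ℝ E ∘ₗ coeLM ℝ)

variable {E}

@[simp]
theorem traceCLM_apply (L : E →L[ℝ] E) : traceCLM E L = LinearMap.trace ℝ E L := rfl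

theorem traceCLM_smulRight (L : E →L[ℝ] ℝ) (w : E) : traceCLM E (L.smulRight w) = L w :=
  LinearMap.trace_smulRight (L : E →ₗ[ℝ] ℝ) w

theorem traceCLM_fderiv_deriv_slice_eq_zero {f : E × ℝ → E} (hf : ContDiff ℝ 2 f)
    (hdiv : ∀ x t, traceCLM E (fderiv ℝ (fun y => f (y, t)) x) = 0) (x : E) (t : ℝ) :
    traceCLM E (fderiv ℝ (fun y => deriv (fun s => f (y, s)) t) x) = 0 := by
  have hslice : Differentiable ℝ fun s => fderiv ℝ (fun y => f (y, s)) x := by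
    simp only [fderiv_slice_fst (hf.differentiable (by simp) _)]
    exact ((hf.fderiv_right (m := 1) (by norm_num)).differentiable one_ne_zero).comp
      (differentiable_const x |>.prodMk differentiable_id) |>.clm_comp (differentiable_const _)
  have hderiv := ((traceCLM E).hasFDerivAt.comp_hasDerivAt t (hslice t).hasDerivAt).deriv
  simp only [Function.comp_def, hdiv, deriv_const] at hderiv
  rw [fderiv_deriv_slice_comm hf, ← hderiv]

end Trace

theorem vdiv_eq_traceCLM {d : ℕ} (V : EuclideanSpace ℝ (Fin d) → EuclideanSpace ℝ (Fin d))
    (x : EuclideanSpace ℝ (Fin d)) : vdiv V x = traceCLM _ (fderiv ℝ V x) := by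
  rw [traceCLM_apply,
    LinearMap.trace_eq_matrix_trace ℝ (EuclideanSpace.basisFun (Fin d) ℝ).toBasis, Matrix.trace,
    vdiv]
  simp [LinearMap.toMatrix_apply]

section Primitive

variable {E F : Type*} [NormedAddCommGroup E] [NormedSpace ℝ E] [FiniteDimensional ℝ E]
  [NormedAddCommGroup F] [NormedSpace ℝ F] {h : E × ℝ → F}

theorem hasFDerivAt_intervalIntegral_slice (hh : ContDiff ℝ 1 h) (a b : ℝ) (x : E) :
    HasFDerivAt (fun y => ∫ s in a..b, h (y, s))
      (∫ s in a..b, fderiv ℝ (fun y => h (y, s)) x) x := by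
  have hd : Differentiable ℝ h := hh.differentiable one_ne_zero
  have hK : IsCompact (Metric.closedBall x 1 ×ˢ Set.uIcc a b) :=
    (isCompact_closedBall x 1).prod isCompact_uIcc
  obtain ⟨M, hM⟩ :=
    hK.exists_bound_of_continuousOn (continuous_fderiv_slice_fst hh).continuousOn
  have hcont : ∀ y : E, Continuous fun s => h (y, s) := fun y =>
    hh.continuous.comp (continuous_const.prodMk continuous_id)
  refine intervalIntegral.hasFDerivAt_integral_of_dominated_of_fderiv_le (bound := fun _ => M)
    (Metric.closedBall_mem_nhds x one_pos) (.of_forall fun y => (hcont y).aestronglyMeasurable)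
    ((hcont x).intervalIntegrable a b)
    ((continuous_fderiv_slice_fst hh).comp
      (continuous_const.prodMk continuous_id)).aestronglyMeasurable
    (.of_forall fun s hs y hy => hM (y, s) ⟨hy, Set.uIoc_subset_uIcc hs⟩)
    intervalIntegrable_const
    (.of_forall fun s _ y _ => DifferentiableAt.hasFDerivAt (by fun_prop))

theorem hasFDerivAt_intervalIntegral_slice_upper [CompleteSpace F] (hh : ContDiff ℝ 1 h) (a : ℝ)
    (x : E) (t : ℝ) :
    HasFDerivAt (fun p : E × ℝ => ∫ s in a..p.2, h (p.1, s))
      ((∫ s in a..t, fderiv ℝ (fun y => h (y, s)) x).coprod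
        ((1 : ℝ →L[ℝ] ℝ).smulRight (h (x, t)))) (x, t) := by
  have hcont : ∀ y : E, Continuous fun s => h (y, s) := fun y =>
    hh.continuous.comp (continuous_const.prodMk continuous_id)
  have hfst : ∀ p : E × ℝ, HasFDerivAt (fun y => ∫ s in a..p.2, h (y, s))
      (∫ s in a..p.2, fderiv ℝ (fun y => h (y, s)) p.1) p.1 := fun p =>
    hasFDerivAt_intervalIntegral_slice hh a p.2 p.1
  have hsnd : ∀ p : E × ℝ, HasFDerivAt (fun t => ∫ s in a..t, h (p.1, s))
      ((1 : ℝ →L[ℝ] ℝ).smulRight (h (p.1, p.2))) p.2 := fun p =>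
    (intervalIntegral.integral_hasDerivAt_right ((hcont p.1).intervalIntegrable _ _)
      (hcont p.1).aestronglyMeasurable.stronglyMeasurableAtFilter
      (hcont p.1).continuousAt).hasFDerivAt
  have hfst_cont :
      Continuous fun p : E × ℝ => ∫ s in a..p.2, fderiv ℝ (fun y => h (y, s)) p.1 :=
    intervalIntegral.continuous_parametric_primitive_of_continuous
      (f := fun y s => fderiv ℝ (fun z => h (z, s)) y) (continuous_fderiv_slice_fst hh)
  have hsnd_cont :
      Continuous fun p : E × ℝ => (1 : ℝ →L[ℝ] ℝ).smulRight (h (p.1, p.2)) := by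
    have := hh.continuous
    fun_prop
  have key := hasStrictFDerivAt_uncurry_coprod (u := (x, t))
    (f := fun y t => ∫ s in a..t, h (y, s))
    (f₁ := fun y t => ∫ s in a..t, fderiv ℝ (fun z => h (z, s)) y)
    (f₂ := fun y t => (1 : ℝ →L[ℝ] ℝ).smulRight (h (y, t))) (.of_forall hfst) (.of_forall hsnd)
    hfst_cont.continuousAt hsnd_cont.continuousAt
  exact key.hasFDerivAt

end Primitive

theorem ContinuousLinearMap.map_intervalIntegral_eq_zero {E F : Type*} [NormedAddCommGroup E]
    [NormedSpace ℝ E] [CompleteSpace E] [NormedAddCommGroup F] [NormedSpace ℝ F] [CompleteSpace F]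
    (L : E →L[ℝ] F) {φ : ℝ → E} (hφ : ∀ s, L (φ s) = 0) (a b : ℝ) :
    L (∫ s in a..b, φ s) = 0 := by
  by_cases hint : IntervalIntegrable φ volume a b
  · simp [← L.intervalIntegral_comp_comm hint, hφ]
  · rw [intervalIntegral.integral_undef hint, map_zero]

theorem HasCompactSupport.exists_forall_le_eq_zero {F : Type*} [Zero F] {ρ : ℝ → F}
    (hρ : HasCompactSupport ρ) : ∃ a, ∀ s ≤ a, ρ s = 0 := by
  obtain ⟨m, hm⟩ := hρ.isCompact.bddBelow
  exact ⟨m - 1, fun s hs => image_eq_zero_of_notMem_tsupport fun hmem => by linarith [hm hmem]⟩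

theorem setIntegral_Iio_eq_intervalIntegral {F : Type*} [NormedAddCommGroup F] [NormedSpace ℝ F]
    {φ : ℝ → F} (hφ : Integrable φ) {a : ℝ} (ha : ∀ s ≤ a, φ s = 0) (b : ℝ) :
    ∫ s in Set.Iio b, φ s = ∫ s in a..b, φ s := by
  rw [setIntegral_congr_set Iio_ae_eq_Iic, ← intervalIntegral.integral_Iic_sub_Iic
    hφ.integrableOn hφ.integrableOn, setIntegral_eq_zero_of_forall_eq_zero (t := Set.Iic a) ha,
    sub_zero]

section KineticIntegrand

variable {E : Type*} [NormedAddCommGroup E] [NormedSpace ℝ E] {f : E × ℝ → E} {ρ : ℝ → ℝ}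

noncomputable def kineticIntegrand (f : E × ℝ → E) (ρ : ℝ → ℝ) (p : E × ℝ) : E :=
  ρ p.2 • deriv (fun s => f (p.1, s)) p.2

theorem contDiff_kineticIntegrand (hf : ContDiff ℝ 2 f) (hρ : ContDiff ℝ 1 ρ) :
    ContDiff ℝ 1 (kineticIntegrand f ρ) :=
  (hρ.comp contDiff_snd).smul (contDiff_deriv_slice hf)

theorem integrable_kineticIntegrand (hf : ContDiff ℝ 2 f) (hρ : ContDiff ℝ 1 ρ)
    (hρsupp : HasCompactSupport ρ) (x : E) : Integrable fun s => kineticIntegrand f ρ (x, s) :=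
  ((contDiff_kineticIntegrand hf hρ).continuous.comp
    (continuous_const.prodMk continuous_id)).integrable_of_hasCompactSupport hρsupp.smul_right

theorem traceCLM_fderiv_kineticIntegrand_eq_zero [FiniteDimensional ℝ E] (hf : ContDiff ℝ 2 f)
    (hdiv : ∀ x t, traceCLM E (fderiv ℝ (fun y => f (y, t)) x) = 0) (x : E) (t : ℝ) :
    traceCLM E (fderiv ℝ (fun y => kineticIntegrand f ρ (y, t)) x) = 0 := by
  have hd : DifferentiableAt ℝ (fun y => deriv (fun s => f (y, s)) t) x :=
    ((contDiff_deriv_slice hf).differentiable one_ne_zero).comp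
      (differentiable_id.prodMk (differentiable_const t)) x
  simp only [kineticIntegrand]
  rw [fderiv_fun_const_smul hd, map_smul, traceCLM_fderiv_deriv_slice_eq_zero hf hdiv, smul_zero]

theorem traceCLM_intervalIntegral_fderiv_kineticIntegrand_eq_zero [FiniteDimensional ℝ E]
    (hf : ContDiff ℝ 2 f) (hdiv : ∀ x t, traceCLM E (fderiv ℝ (fun y => f (y, t)) x) = 0)
    (a b : ℝ) (x : E) :
    traceCLM E (∫ s in a..b, fderiv ℝ (fun y => kineticIntegrand f ρ (y, s)) x) = 0 :=
  (traceCLM E).map_intervalIntegral_eq_zero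
    (traceCLM_fderiv_kineticIntegrand_eq_zero hf hdiv x) a b

end KineticIntegrand

theorem vdiv_comp_graph {d : ℕ} {F : EuclideanSpace ℝ (Fin d) × ℝ → EuclideanSpace ℝ (Fin d)}
    {u : EuclideanSpace ℝ (Fin d) → ℝ} {x : EuclideanSpace ℝ (Fin d)}
    {A : EuclideanSpace ℝ (Fin d) →L[ℝ] EuclideanSpace ℝ (Fin d)} {w : EuclideanSpace ℝ (Fin d)}
    {L : EuclideanSpace ℝ (Fin d) →L[ℝ] ℝ}
    (hF : HasFDerivAt F (A.coprod ((1 : ℝ →L[ℝ] ℝ).smulRight w)) (x, u x))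
    (hu : HasFDerivAt u L x) :
    vdiv (fun y => F (y, u y)) x = traceCLM _ A + L w := by
  rw [vdiv_eq_traceCLM, (hF.comp_graph hu).fderiv, map_add, traceCLM_smulRight]

/-- Kinetic flux identity: if `f : ℝ^d × ℝ → ℝ^d` is `C²` and divergence-free in `x`
for every fixed `λ` (geometry compatibility), `u : ℝ^d → ℝ` is `C¹`, and
`ρ : ℝ → ℝ` is `C¹` with compact support, then the vector field
`Y(x) = ∫_{(-∞, u(x))} ρ(λ) ∂_λ f(x,λ) dλ` is differentiable with
`div Y(x) = ρ(u(x)) · div(y ↦ f(y,u(y)))(x)`. -/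
theorem div_kinetic_flux
    (d : ℕ)
    (f : EuclideanSpace ℝ (Fin d) × ℝ → EuclideanSpace ℝ (Fin d))
    (hf : ContDiff ℝ 2 f)
    (hdiv : ∀ (x : EuclideanSpace ℝ (Fin d)) (lam : ℝ),
      vdiv (fun y => f (y, lam)) x = 0)
    (u : EuclideanSpace ℝ (Fin d) → ℝ) (hu : ContDiff ℝ 1 u)
    (ρ : ℝ → ℝ) (hρ : ContDiff ℝ 1 ρ) (hρsupp : HasCompactSupport ρ)
    (Y : EuclideanSpace ℝ (Fin d) → EuclideanSpace ℝ (Fin d))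
    (hY : ∀ x, Y x = ∫ lam in Set.Iio (u x), ρ lam • deriv (fun s => f (x, s)) lam) :
    ∀ x, DifferentiableAt ℝ Y x ∧
      vdiv Y x = ρ (u x) * vdiv (fun y => f (y, u y)) x := by
  intro x
  obtain ⟨a, ha⟩ := hρsupp.exists_forall_le_eq_zero
  obtain rfl : Y = fun y => ∫ s in a..u y, kineticIntegrand f ρ (y, s) := funext fun y =>
    (hY y).trans (setIntegral_Iio_eq_intervalIntegral (integrable_kineticIntegrand hf hρ hρsupp y)
      (fun s hs => by simp [kineticIntegrand, ha s hs]) _)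
  have hu' := (hu.differentiable one_ne_zero x).hasFDerivAt
  have hY' := hasFDerivAt_intervalIntegral_slice_upper (contDiff_kineticIntegrand hf hρ) a x (u x)
  refine ⟨(hY'.comp_graph hu').differentiableAt, ?_⟩
  have hdiv' : ∀ y t, traceCLM _ (fderiv ℝ (fun z => f (z, t)) y) = 0 := fun y t =>
    (vdiv_eq_traceCLM _ _).symm.trans (hdiv y t)
  have hdivY : vdiv (fun y => ∫ s in a..u y, kineticIntegrand f ρ (y, s)) x
      = fderiv ℝ u x (kineticIntegrand f ρ (x, u x)) := by
    rw [vdiv_comp_graph hY' hu',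
      traceCLM_intervalIntegral_fderiv_kineticIntegrand_eq_zero hf hdiv', zero_add]
  have hdivf : vdiv (fun y => f (y, u y)) x = fderiv ℝ u x (deriv (fun s => f (x, s)) (u x)) := by
    rw [vdiv_comp_graph (hasFDerivAt_coprod_partials (hf.differentiable (by simp) _)) hu', hdiv',
      zero_add]
  rw [hdivY, hdivf, kineticIntegrand, map_smul, smul_eq_mul]
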